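/- Let A be a finite set and v a complete score matrix, i.e., v_{xy} ≥ 0 and v_{xy} + v_{yx} = 1 for all distinct x, y. Define u and w as in the restricted-path construction: u_{xy} = v_{xy} if v_{xy} > v_{yx}, else 0; w_{xy} = v_{xy} if v_{xy} ≥ v_{yx}, else 0. Then the three indirect comparison relations coincide: μ(u*) = μ(w*) = μ(v*), where μ(p) = { (x,y) : p_{xy} > p_{yx} }. -/
import Mathlib


/-- The score of a path (a list of vertices): the minimum of the scores
of its consecutive links. -/
def pathScore {A : Type*} (v : A → A → ℝ) : List A → ℝ
  | [] => 0
  | [_] => 0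
  | [a, b] => v a b
  | a :: b :: c :: l => min (v a b) (pathScore v (b :: c :: l))

/-- `l` is a path from `x` to `y`: a list with at least two entries,
starting at `x` and ending at `y`. -/
def IsPath {A : Type*} (x y : A) (l : List A) : Prop :=
  2 ≤ l.length ∧ l.head? = some x ∧ l.getLast? = some y

/-- The max-min indirect score `v*_{xy}`: the supremum (attained, since the
set of path scores is finite) of path scores over all paths from `x` to `y`. -/
noncomputable def indirectScore {A : Type*} (v : A → A → ℝ) (x y : A) : ℝ :=
  ⨆ l : {l : List A // IsPath x y l}, pathScore v l.1
namespace Aux18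

variable {A : Type*}

lemma pathScore_pair (v : A → A → ℝ) (a b : A) : pathScore v [a, b] = v a b := rfl

lemma pathScore_cons (v : A → A → ℝ) (a b c : A) (l : List A) :
    pathScore v (a :: b :: c :: l) = min (v a b) (pathScore v (b :: c :: l)) := rfl

lemma pathScore_nonneg (v : A → A → ℝ) (hv : ∀ a b, 0 ≤ v a b) :
    ∀ l : List A, 0 ≤ pathScore v l
  | [] => le_refl 0
  | [_] => le_refl 0
  | [a, b] => hv a b
  | a :: b :: c :: l => le_min (hv a b) (pathScore_nonneg v hv (b :: c :: l))

lemma pathScore_mono {v v' : A → A → ℝ} (h : ∀ a b, v a b ≤ v' a b) :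
    ∀ l : List A, pathScore v l ≤ pathScore v' l
  | [] => le_refl 0
  | [_] => le_refl 0
  | [a, b] => h a b
  | a :: b :: c :: l => min_le_min (h a b) (pathScore_mono h (b :: c :: l))

lemma pathScore_mem (v : A → A → ℝ) :
    ∀ l : List A, 2 ≤ l.length → ∃ a b, pathScore v l = v a b
  | [], h => by simp at h
  | [_], h => by simp at h
  | [a, b], _ => ⟨a, b, rfl⟩
  | a :: b :: c :: l, _ => by
    obtain ⟨p, q, hpq⟩ := pathScore_mem v (b :: c :: l) (by simp)
    rcases min_cases (v a b) (pathScore v (b :: c :: l)) with ⟨h, -⟩ | ⟨h, -⟩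
    · exact ⟨a, b, h⟩
    · exact ⟨p, q, by rw [pathScore_cons, h, hpq]⟩

lemma isPath_pair (x y : A) : IsPath x y [x, y] := ⟨by simp, by simp, by simp⟩

instance (x y : A) : Nonempty {l : List A // IsPath x y l} :=
  ⟨⟨[x, y], isPath_pair x y⟩⟩

lemma range_finite [Fintype A] (v : A → A → ℝ) (x y : A) :
    (Set.range fun l : {l : List A // IsPath x y l} => pathScore v l.1).Finite := by
  apply (Set.finite_range fun p : A × A => v p.1 p.2).subset
  rintro r ⟨⟨l, hl⟩, rfl⟩
  obtain ⟨a, b, h⟩ := pathScore_mem v l hl.1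
  exact ⟨(a, b), h.symm⟩

lemma le_indirectScore [Fintype A] (v : A → A → ℝ) {x y : A} {l : List A}
    (hl : IsPath x y l) : pathScore v l ≤ indirectScore v x y :=
  le_ciSup (range_finite v x y).bddAbove ⟨l, hl⟩

lemma indirectScore_le [Fintype A] (v : A → A → ℝ) {x y : A} {c : ℝ}
    (h : ∀ l : List A, IsPath x y l → pathScore v l ≤ c) :
    indirectScore v x y ≤ c :=
  ciSup_le fun l => h l.1 l.2

lemma exists_isPath_max [Fintype A] (v : A → A → ℝ) (x y : A) :
    ∃ l, IsPath x y l ∧ pathScore v l = indirectScore v x y := by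
  have hne : (Set.range fun l : {l : List A // IsPath x y l} =>
      pathScore v l.1).Nonempty := Set.range_nonempty _
  obtain ⟨⟨l, hl⟩, h⟩ := hne.csSup_mem (range_finite v x y)
  exact ⟨l, hl, h⟩

lemma indirectScore_nonneg [Fintype A] (v : A → A → ℝ) (hv : ∀ a b, 0 ≤ v a b)
    (x y : A) : 0 ≤ indirectScore v x y :=
  le_trans (pathScore_nonneg v hv [x, y]) (le_indirectScore v (isPath_pair x y))

lemma indirectScore_mono [Fintype A] {v v' : A → A → ℝ} (h : ∀ a b, v a b ≤ v' a b)
    (x y : A) : indirectScore v x y ≤ indirectScore v' x y :=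
  indirectScore_le v fun l hl => le_trans (pathScore_mono h l) (le_indirectScore v' hl)


lemma claim1_u [Fintype A] (v u : A → A → ℝ)
    (hcomplete : ∀ x y : A, x ≠ y → v x y + v y x = 1)
    (hu : ∀ x y : A, u x y = if v y x < v x y then v x y else 0) :
    ∀ (n : ℕ) (l : List A) (x y : A), l.length ≤ n → IsPath x y l → x ≠ y →
      0 < pathScore u l → 1/2 < indirectScore v x y := by
  intro n
  induction n with
  | zero => intro l x y hn hl; have := hl.1; omega
  | succ n ih =>
    intro l x y hn hl hxy hpos
    obtain ⟨hlen, hhead, hlast⟩ := hl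
    rcases l with _ | ⟨a, _ | ⟨b, t⟩⟩
    · simp at hlen
    · simp at hlen
    · have hax : a = x := by simpa using hhead
      subst hax
      rcases t with _ | ⟨c, t⟩
      · -- l = [a, b]
        have hby : b = y := by simpa using hlast
        rw [pathScore_pair, hu] at hpos
        split at hpos
        · rename_i h
          have hab : a ≠ b := fun hh => hxy (hh.trans hby)
          have hs := hcomplete a b hab
          have h2 : 1/2 < v a b := by linarith
          calc (1:ℝ)/2 < v a b := h2
            _ = pathScore v [a, b] := rfl
            _ ≤ indirectScore v a y :=
                le_indirectScore v ⟨by simp, by simp, by simp [hby]⟩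
        · exact absurd hpos (lt_irrefl 0)
      · -- l = a :: b :: c :: t
        rw [pathScore_cons] at hpos
        have h1 : 0 < u a b := lt_of_lt_of_le hpos (min_le_left _ _)
        have h2 : 0 < pathScore u (b :: c :: t) := lt_of_lt_of_le hpos (min_le_right _ _)
        rw [hu] at h1
        have hvb : v b a < v a b := by
          by_contra h; rw [if_neg h] at h1; exact absurd h1 (lt_irrefl 0)
        have hab : a ≠ b := fun h => by rw [h] at hvb; exact lt_irrefl _ hvb
        have hhalf : 1/2 < v a b := by have := hcomplete a b hab; linarith
        rw [List.getLast?_cons_cons] at hlast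
        have hpath2 : IsPath b y (b :: c :: t) := ⟨by simp, rfl, hlast⟩
        by_cases hby : b = y
        · calc (1:ℝ)/2 < v a b := hhalf
            _ = pathScore v [a, b] := rfl
            _ ≤ indirectScore v a y :=
                le_indirectScore v ⟨by simp, by simp, by simp [hby]⟩
        · have hlt := ih (b :: c :: t) b y (by simp at hn ⊢; omega) hpath2 hby h2
          obtain ⟨⟨m, hm⟩, hmgt⟩ := exists_lt_of_lt_ciSup hlt
          obtain ⟨hm2, hmh, hml⟩ := hm
          rcases m with _ | ⟨mb, _ | ⟨mc, mt⟩⟩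
          · simp at hm2
          · simp at hm2
          · have hmb : mb = b := by simpa using hmh
            have hpath3 : IsPath a y (a :: mb :: mc :: mt) :=
              ⟨by simp, rfl, by rw [List.getLast?_cons_cons]; exact hml⟩
            calc (1:ℝ)/2 < min (v a mb) (pathScore v (mb :: mc :: mt)) :=
                lt_min (by rw [hmb]; exact hhalf) hmgt
              _ = pathScore v (a :: mb :: mc :: mt) := rfl
              _ ≤ indirectScore v a y := le_indirectScore v hpath3

lemma claim1_w [Fintype A] (v w : A → A → ℝ)
    (hcomplete : ∀ x y : A, x ≠ y → v x y + v y x = 1)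
    (hw : ∀ x y : A, w x y = if v y x ≤ v x y then v x y else 0) :
    ∀ (n : ℕ) (l : List A) (x y : A), l.length ≤ n → IsPath x y l → x ≠ y →
      0 < pathScore w l → 1/2 ≤ indirectScore v x y := by
  intro n
  induction n with
  | zero => intro l x y hn hl; have := hl.1; omega
  | succ n ih =>
    intro l x y hn hl hxy hpos
    obtain ⟨hlen, hhead, hlast⟩ := hl
    rcases l with _ | ⟨a, _ | ⟨b, t⟩⟩
    · simp at hlen
    · simp at hlen
    · have hax : a = x := by simpa using hhead
      subst hax
      rcases t with _ | ⟨c, t⟩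
      · -- l = [a, b]
        have hby : b = y := by simpa using hlast
        rw [pathScore_pair, hw] at hpos
        split at hpos
        · rename_i h
          have hab : a ≠ b := fun hh => hxy (hh.trans hby)
          have hs := hcomplete a b hab
          have h2 : 1/2 ≤ v a b := by linarith
          calc (1:ℝ)/2 ≤ v a b := h2
            _ = pathScore v [a, b] := rfl
            _ ≤ indirectScore v a y :=
                le_indirectScore v ⟨by simp, by simp, by simp [hby]⟩
        · exact absurd hpos (lt_irrefl 0)
      · -- l = a :: b :: c :: t
        rw [pathScore_cons] at hpos
        have h1 : 0 < w a b := lt_of_lt_of_le hpos (min_le_left _ _)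
        have h2 : 0 < pathScore w (b :: c :: t) := lt_of_lt_of_le hpos (min_le_right _ _)
        rw [List.getLast?_cons_cons] at hlast
        by_cases hab : a = b
        · -- drop the repeated vertex
          exact ih (b :: c :: t) a y (by simp at hn ⊢; omega)
            ⟨by simp, by simp [hab], hlast⟩ hxy h2
        · rw [hw] at h1
          have hvb : v b a ≤ v a b := by
            by_contra h; rw [if_neg h] at h1; exact absurd h1 (lt_irrefl 0)
          have hhalf : 1/2 ≤ v a b := by have := hcomplete a b hab; linarith
          have hpath2 : IsPath b y (b :: c :: t) := ⟨by simp, rfl, hlast⟩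
          by_cases hby : b = y
          · calc (1:ℝ)/2 ≤ v a b := hhalf
              _ = pathScore v [a, b] := rfl
              _ ≤ indirectScore v a y :=
                  le_indirectScore v ⟨by simp, by simp, by simp [hby]⟩
          · have hge := ih (b :: c :: t) b y (by simp at hn ⊢; omega) hpath2 hby h2
            obtain ⟨m, hm, hmeq⟩ := exists_isPath_max v b y
            have hmge : 1/2 ≤ pathScore v m := by rw [hmeq]; exact hge
            obtain ⟨hm2, hmh, hml⟩ := hm
            rcases m with _ | ⟨mb, _ | ⟨mc, mt⟩⟩
            · simp at hm2
            · simp at hm2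
            · have hmb : mb = b := by simpa using hmh
              have hpath3 : IsPath a y (a :: mb :: mc :: mt) :=
                ⟨by simp, rfl, by rw [List.getLast?_cons_cons]; exact hml⟩
              calc (1:ℝ)/2 ≤ min (v a mb) (pathScore v (mb :: mc :: mt)) :=
                  le_min (by rw [hmb]; exact hhalf) hmge
                _ = pathScore v (a :: mb :: mc :: mt) := rfl
                _ ≤ indirectScore v a y := le_indirectScore v hpath3

lemma claim2_u [Fintype A] (v u : A → A → ℝ) (hv : ∀ a b, 0 ≤ v a b)
    (hcomplete : ∀ x y : A, x ≠ y → v x y + v y x = 1)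
    (hu : ∀ x y : A, u x y = if v y x < v x y then v x y else 0) :
    ∀ (n : ℕ) (l : List A) (x y : A), l.length ≤ n → IsPath x y l → x ≠ y →
      1/2 < pathScore v l → pathScore v l ≤ indirectScore u x y := by
  intro n
  induction n with
  | zero => intro l x y hn hl; have := hl.1; omega
  | succ n ih =>
    intro l x y hn hl hxy hgt
    obtain ⟨hlen, hhead, hlast⟩ := hl
    rcases l with _ | ⟨a, _ | ⟨b, t⟩⟩
    · simp at hlen
    · simp at hlen
    · have hax : a = x := by simpa using hhead
      subst hax
      rcases t with _ | ⟨c, t⟩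
      · -- l = [a, b]
        have hby : b = y := by simpa using hlast
        have hab : a ≠ b := fun hh => hxy (hh.trans hby)
        rw [pathScore_pair] at hgt ⊢
        have hs := hcomplete a b hab
        have huv : u a b = v a b := by rw [hu, if_pos (by linarith)]
        calc v a b = u a b := huv.symm
          _ = pathScore u [a, b] := rfl
          _ ≤ indirectScore u a y :=
              le_indirectScore u ⟨by simp, by simp, by simp [hby]⟩
      · -- l = a :: b :: c :: t
        rw [pathScore_cons] at hgt ⊢
        have h1 : 1/2 < v a b := lt_of_lt_of_le hgt (min_le_left _ _)
        have h2 : 1/2 < pathScore v (b :: c :: t) := lt_of_lt_of_le hgt (min_le_right _ _)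
        rw [List.getLast?_cons_cons] at hlast
        by_cases hab : a = b
        · -- drop the repeated vertex
          have := ih (b :: c :: t) a y (by simp at hn ⊢; omega)
            ⟨by simp, by simp [hab], hlast⟩ hxy h2
          exact le_trans (min_le_right _ _) this
        · have hs := hcomplete a b hab
          have huv : u a b = v a b := by rw [hu, if_pos (by linarith)]
          by_cases hby : b = y
          · refine le_trans (min_le_left _ _) ?_
            calc v a b = u a b := huv.symm
              _ = pathScore u [a, b] := rfl
              _ ≤ indirectScore u a y :=
                  le_indirectScore u ⟨by simp, by simp, by simp [hby]⟩
          · have hrec := ih (b :: c :: t) b y (by simp at hn ⊢; omega)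
              ⟨by simp, rfl, hlast⟩ hby h2
            obtain ⟨m, hm, hmeq⟩ := exists_isPath_max u b y
            have hmge : pathScore v (b :: c :: t) ≤ pathScore u m := by
              rw [hmeq]; exact hrec
            obtain ⟨hm2, hmh, hml⟩ := hm
            rcases m with _ | ⟨mb, _ | ⟨mc, mt⟩⟩
            · simp at hm2
            · simp at hm2
            · have hmb : mb = b := by simpa using hmh
              have hpath3 : IsPath a y (a :: mb :: mc :: mt) :=
                ⟨by simp, rfl, by rw [List.getLast?_cons_cons]; exact hml⟩
              calc min (v a b) (pathScore v (b :: c :: t))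
                  ≤ min (u a mb) (pathScore u (mb :: mc :: mt)) := by
                    apply min_le_min
                    · rw [hmb, huv]
                    · exact hmge
                _ = pathScore u (a :: mb :: mc :: mt) := rfl
                _ ≤ indirectScore u a y := le_indirectScore u hpath3

lemma claim2_w [Fintype A] (v w : A → A → ℝ) (hv : ∀ a b, 0 ≤ v a b)
    (hcomplete : ∀ x y : A, x ≠ y → v x y + v y x = 1)
    (hw : ∀ x y : A, w x y = if v y x ≤ v x y then v x y else 0) :
    ∀ (n : ℕ) (l : List A) (x y : A), l.length ≤ n → IsPath x y l → x ≠ y →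
      1/2 ≤ pathScore v l → pathScore v l ≤ indirectScore w x y := by
  intro n
  induction n with
  | zero => intro l x y hn hl; have := hl.1; omega
  | succ n ih =>
    intro l x y hn hl hxy hgt
    obtain ⟨hlen, hhead, hlast⟩ := hl
    rcases l with _ | ⟨a, _ | ⟨b, t⟩⟩
    · simp at hlen
    · simp at hlen
    · have hax : a = x := by simpa using hhead
      subst hax
      rcases t with _ | ⟨c, t⟩
      · -- l = [a, b]
        have hby : b = y := by simpa using hlast
        have hab : a ≠ b := fun hh => hxy (hh.trans hby)
        rw [pathScore_pair] at hgt ⊢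
        have hs := hcomplete a b hab
        have hwv : w a b = v a b := by rw [hw, if_pos (by linarith)]
        calc v a b = w a b := hwv.symm
          _ = pathScore w [a, b] := rfl
          _ ≤ indirectScore w a y :=
              le_indirectScore w ⟨by simp, by simp, by simp [hby]⟩
      · -- l = a :: b :: c :: t
        rw [pathScore_cons] at hgt ⊢
        have h1 : 1/2 ≤ v a b := le_trans hgt (min_le_left _ _)
        have h2 : 1/2 ≤ pathScore v (b :: c :: t) := le_trans hgt (min_le_right _ _)
        rw [List.getLast?_cons_cons] at hlast
        by_cases hab : a = b
        · have := ih (b :: c :: t) a y (by simp at hn ⊢; omega)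
            ⟨by simp, by simp [hab], hlast⟩ hxy h2
          exact le_trans (min_le_right _ _) this
        · have hs := hcomplete a b hab
          have hwv : w a b = v a b := by rw [hw, if_pos (by linarith)]
          by_cases hby : b = y
          · refine le_trans (min_le_left _ _) ?_
            calc v a b = w a b := hwv.symm
              _ = pathScore w [a, b] := rfl
              _ ≤ indirectScore w a y :=
                  le_indirectScore w ⟨by simp, by simp, by simp [hby]⟩
          · have hrec := ih (b :: c :: t) b y (by simp at hn ⊢; omega)
              ⟨by simp, rfl, hlast⟩ hby h2
            obtain ⟨m, hm, hmeq⟩ := exists_isPath_max w b y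
            have hmge : pathScore v (b :: c :: t) ≤ pathScore w m := by
              rw [hmeq]; exact hrec
            obtain ⟨hm2, hmh, hml⟩ := hm
            rcases m with _ | ⟨mb, _ | ⟨mc, mt⟩⟩
            · simp at hm2
            · simp at hm2
            · have hmb : mb = b := by simpa using hmh
              have hpath3 : IsPath a y (a :: mb :: mc :: mt) :=
                ⟨by simp, rfl, by rw [List.getLast?_cons_cons]; exact hml⟩
              calc min (v a b) (pathScore v (b :: c :: t))
                  ≤ min (w a mb) (pathScore w (mb :: mc :: mt)) := by
                    apply min_le_min
                    · rw [hmb, hwv]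
                    · exact hmge
                _ = pathScore w (a :: mb :: mc :: mt) := rfl
                _ ≤ indirectScore w a y := le_indirectScore w hpath3

lemma uStar_zero [Fintype A] (v u : A → A → ℝ) (hv : ∀ a b, 0 ≤ v a b)
    (hcomplete : ∀ x y : A, x ≠ y → v x y + v y x = 1)
    (hu : ∀ x y : A, u x y = if v y x < v x y then v x y else 0)
    {p q : A} (hpq : p ≠ q) (h : indirectScore v p q ≤ 1/2) :
    indirectScore u p q = 0 := by
  have hu0 : ∀ a b, 0 ≤ u a b := by
    intro a b; rw [hu]; split
    · exact hv a b
    · exact le_refl 0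
  refine le_antisymm ?_ (indirectScore_nonneg u hu0 p q)
  apply indirectScore_le
  intro l hl
  by_contra hc
  push_neg at hc
  exact absurd (claim1_u v u hcomplete hu l.length l p q le_rfl hl hpq hc)
    (not_lt.2 h)

lemma uStar_eq [Fintype A] (v u : A → A → ℝ) (hv : ∀ a b, 0 ≤ v a b)
    (hcomplete : ∀ x y : A, x ≠ y → v x y + v y x = 1)
    (hu : ∀ x y : A, u x y = if v y x < v x y then v x y else 0)
    {p q : A} (hpq : p ≠ q) (h : 1/2 < indirectScore v p q) :
    indirectScore u p q = indirectScore v p q := by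
  have huv : ∀ a b, u a b ≤ v a b := by
    intro a b; rw [hu]; split
    · exact le_refl _
    · exact hv a b
  refine le_antisymm (indirectScore_mono huv p q) ?_
  obtain ⟨l, hl, hleq⟩ := exists_isPath_max v p q
  calc indirectScore v p q = pathScore v l := hleq.symm
    _ ≤ indirectScore u p q :=
        claim2_u v u hv hcomplete hu l.length l p q le_rfl hl hpq (by rw [hleq]; exact h)

lemma wStar_zero [Fintype A] (v w : A → A → ℝ) (hv : ∀ a b, 0 ≤ v a b)
    (hcomplete : ∀ x y : A, x ≠ y → v x y + v y x = 1)
    (hw : ∀ x y : A, w x y = if v y x ≤ v x y then v x y else 0)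
    {p q : A} (hpq : p ≠ q) (h : indirectScore v p q < 1/2) :
    indirectScore w p q = 0 := by
  have hw0 : ∀ a b, 0 ≤ w a b := by
    intro a b; rw [hw]; split
    · exact hv a b
    · exact le_refl 0
  refine le_antisymm ?_ (indirectScore_nonneg w hw0 p q)
  apply indirectScore_le
  intro l hl
  by_contra hc
  push_neg at hc
  exact absurd (claim1_w v w hcomplete hw l.length l p q le_rfl hl hpq hc)
    (not_le.2 h)

lemma wStar_eq [Fintype A] (v w : A → A → ℝ) (hv : ∀ a b, 0 ≤ v a b)
    (hcomplete : ∀ x y : A, x ≠ y → v x y + v y x = 1)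
    (hw : ∀ x y : A, w x y = if v y x ≤ v x y then v x y else 0)
    {p q : A} (hpq : p ≠ q) (h : 1/2 ≤ indirectScore v p q) :
    indirectScore w p q = indirectScore v p q := by
  have hwv : ∀ a b, w a b ≤ v a b := by
    intro a b; rw [hw]; split
    · exact le_refl _
    · exact hv a b
  refine le_antisymm (indirectScore_mono hwv p q) ?_
  obtain ⟨l, hl, hleq⟩ := exists_isPath_max v p q
  calc indirectScore v p q = pathScore v l := hleq.symm
    _ ≤ indirectScore w p q :=
        claim2_w v w hv hcomplete hw l.length l p q le_rfl hl hpq (by rw [hleq]; exact h)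

end Aux18

open Aux18 in
theorem stmt18 {A : Type*} [Fintype A] (v u w : A → A → ℝ)
    (hv : ∀ x y : A, 0 ≤ v x y)
    (hcomplete : ∀ x y : A, x ≠ y → v x y + v y x = 1)
    (hu : ∀ x y : A, u x y = if v y x < v x y then v x y else 0)
    (hw : ∀ x y : A, w x y = if v y x ≤ v x y then v x y else 0)
    (x y : A) (hxy : x ≠ y) :
    (indirectScore u y x < indirectScore u x y ↔
      indirectScore v y x < indirectScore v x y) ∧
    (indirectScore w y x < indirectScore w x y ↔
      indirectScore v y x < indirectScore v x y) := by
  have hva : v x y ≤ indirectScore v x y := by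
    calc v x y = pathScore v [x, y] := rfl
      _ ≤ indirectScore v x y := le_indirectScore v (isPath_pair x y)
  have hvb : v y x ≤ indirectScore v y x := by
    calc v y x = pathScore v [y, x] := rfl
      _ ≤ indirectScore v y x := le_indirectScore v (isPath_pair y x)
  have hsum : v x y + v y x = 1 := hcomplete x y hxy
  have h0a : 0 ≤ v x y := hv x y
  have h0b : 0 ≤ v y x := hv y x
  constructor
  · -- u part
    by_cases h1 : 1/2 < indirectScore v x y <;>
      by_cases h2 : 1/2 < indirectScore v y x
    · rw [uStar_eq v u hv hcomplete hu hxy h1, uStar_eq v u hv hcomplete hu hxy.symm h2]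
    · rw [uStar_eq v u hv hcomplete hu hxy h1,
        uStar_zero v u hv hcomplete hu hxy.symm (not_lt.1 h2)]
      push_neg at h2
      constructor <;> intro <;> linarith
    · rw [uStar_zero v u hv hcomplete hu hxy (not_lt.1 h1),
        uStar_eq v u hv hcomplete hu hxy.symm h2]
      push_neg at h1
      constructor <;> intro <;> linarith
    · rw [uStar_zero v u hv hcomplete hu hxy (not_lt.1 h1),
        uStar_zero v u hv hcomplete hu hxy.symm (not_lt.1 h2)]
      push_neg at h1 h2
      constructor <;> intro <;> linarith
  · -- w part
    by_cases h1 : 1/2 ≤ indirectScore v x y <;>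
      by_cases h2 : 1/2 ≤ indirectScore v y x
    · rw [wStar_eq v w hv hcomplete hw hxy h1, wStar_eq v w hv hcomplete hw hxy.symm h2]
    · rw [wStar_eq v w hv hcomplete hw hxy h1,
        wStar_zero v w hv hcomplete hw hxy.symm (not_le.1 h2)]
      push_neg at h2
      constructor <;> intro <;> linarith
    · rw [wStar_zero v w hv hcomplete hw hxy (not_le.1 h1),
        wStar_eq v w hv hcomplete hw hxy.symm h2]
      push_neg at h1
      constructor <;> intro <;> linarith
    · push_neg at h1 h2
      constructor <;> intro <;> linarith
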